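/- Interactions assigned to the same batch by t-Batch are completely independent: for any two distinct interaction indices j and k with batch(j) = batch(k), both u(j) ≠ u(k) and v(j) ≠ v(k); hence all interactions within a batch share no user and no item and can be processed in parallel. -/
import Mathlib


/-- The t-Batch assignment on a sequence of interactions with users `u j` and
items `v j`, defined by strong recursion:
`tBatch u v j = 1 + max{ tBatch u v k : k < j and (u k = u j or v k = v j) }`,
where the maximum over the empty set is `0`. -/
def tBatch {U I : Type*} [DecidableEq U] [DecidableEq I]
    (u : ℕ → U) (v : ℕ → I) (j : ℕ) : ℕ :=
  1 + ((Finset.range j).attach.filter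
      (fun k => u k.1 = u j ∨ v k.1 = v j)).sup (fun k => tBatch u v k.1)
termination_by j
decreasing_by
  exact Finset.mem_range.mp k.2

lemma tBatch_lt {U I : Type*} [DecidableEq U] [DecidableEq I]
    (u : ℕ → U) (v : ℕ → I) {k j : ℕ} (hkj : k < j)
    (h : u k = u j ∨ v k = v j) : tBatch u v k < tBatch u v j := by
  have hmem : (⟨k, Finset.mem_range.mpr hkj⟩ : {x // x ∈ Finset.range j}) ∈
      (Finset.range j).attach.filter (fun k => u k.1 = u j ∨ v k.1 = v j) := by
    simp [h]
  have hle := Finset.le_sup (f := fun k => tBatch u v k.1) hmem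
  calc tBatch u v k ≤ _ := hle
    _ < tBatch u v j := by
      conv_rhs => rw [tBatch]
      omega

/-- Interactions assigned to the same batch by t-Batch are completely
independent: for any two distinct interaction indices `j` and `k` (among the
`n` interactions) with `batch j = batch k`, both `u j ≠ u k` and
`v j ≠ v k`. -/
theorem tBatch_same_batch_independent
    {U I : Type*} [DecidableEq U] [DecidableEq I]
    (n : ℕ) (u : ℕ → U) (v : ℕ → I)
    (j k : ℕ) (hj : j < n) (hk : k < n) (hjk : j ≠ k)
    (hbatch : tBatch u v j = tBatch u v k) :
    u j ≠ u k ∧ v j ≠ v k := by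
  rcases lt_or_gt_of_ne hjk with h | h
  · constructor <;> intro he
    · exact absurd hbatch (tBatch_lt u v h (Or.inl he)).ne
    · exact absurd hbatch (tBatch_lt u v h (Or.inr he)).ne
  · constructor <;> intro he
    · exact absurd hbatch.symm (tBatch_lt u v h (Or.inl he.symm)).ne
    · exact absurd hbatch.symm (tBatch_lt u v h (Or.inr he.symm)).ne
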